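/- arXiv:2005.13212 — 2 statements merged into one kernel-verified Lean document; each statement's English description precedes it below -/
import Mathlib

section
/- Let X be a nonempty countable metrizable topological space that is perfect (has no isolated points). Then X is homeomorphic to the rational numbers ℚ, and in particular to ℙ_f, the set of eventually-zero sequences in Cantor space. -/
/-!
A countable metrizable space is zero-dimensional (it is completely regular and smaller than the
continuum), and by the Baire category theorem none of its nonempty open subsets is compact when it
has no isolated points. Hence every nonempty clopen set splits into `ℤ`-many nonempty clopen pieces
of arbitrarily small diameter, and iterating the splitting gives a `ℤ`-branching tree of clopen
cells whose diameters shrink to zero. Reading off the branch of a point embeds `X` into `ℕ → ℤ`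
with dense range. On `ℕ → ℤ` the lexicographic order induces the product topology, because `ℤ`
has no endpoints, so the pulled-back order makes `X` a countable dense linear order without
endpoints whose order topology is its topology. Cantor's back-and-forth theorem then gives an
order isomorphism with `ℚ`, which is a homeomorphism. `ℙ_f` is itself such a space.
-/

/-- The set of eventually-zero binary sequences in Cantor space. -/
def Pf : Set (ℕ → Bool) := {α | ∀ᶠ n in Filter.atTop, α n = false}

open Set Filter Topology Metric Function PiNat

namespace PiNat

variable {β : Type*}

theorem nhds_hasBasis_cylinder [TopologicalSpace β] [DiscreteTopology β] (a : ℕ → β) :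
    (𝓝 a).HasBasis (fun _ => True) (cylinder a) :=
  (isTopologicalBasis_cylinders _).nhds_hasBasis.to_hasBasis
    (fun _ ⟨⟨_, n, hs⟩, ha⟩ => ⟨n, trivial, (hs ▸ mem_cylinder_iff_eq.1 (hs ▸ ha)).le⟩)
    fun n _ => ⟨cylinder a n, ⟨⟨a, n, rfl⟩, self_mem_cylinder a n⟩, le_rfl⟩

variable [LinearOrder β]

theorem ordConnected_cylinder (x : ℕ → β) (n : ℕ) :
    (ofLex ⁻¹' cylinder x n : Set (Lex (ℕ → β))).OrdConnected := by
  refine ⟨fun a ha c hc y ⟨hay, hyc⟩ => ?_⟩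
  intro j
  induction j using Nat.strong_induction_on with
  | _ j ih =>
    intro hj
    have hay' : ∀ i < j, ofLex a i = ofLex y i := fun i hi =>
      (ha i (hi.trans hj)).trans (ih i hi (hi.trans hj)).symm
    have hyc' : ∀ i < j, ofLex y i = ofLex c i := fun i hi =>
      (ih i hi (hi.trans hj)).trans (hc i (hi.trans hj)).symm
    exact le_antisymm ((Pi.apply_le_of_toLex hyc hyc').trans (hc j hj).le)
      ((ha j hj).symm.le.trans (Pi.apply_le_of_toLex hay hay'))

theorem exists_Ioo_subset_cylinder [NoMinOrder β] [NoMaxOrder β] (x : ℕ → β) (n : ℕ) :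
    ∃ a c : Lex (ℕ → β), a < toLex x ∧ toLex x < c ∧ Ioo a c ⊆ ofLex ⁻¹' cylinder x n := by
  classical
  obtain ⟨b, hb⟩ := exists_lt (x n)
  obtain ⟨d, hd⟩ := exists_gt (x n)
  have hmem : ∀ e, update x n e ∈ cylinder x n := fun e i hi => update_of_ne hi.ne e x
  exact ⟨toLex (update x n b), toLex (update x n d), Pi.toLex_update_lt_self_iff.2 hb,
    Pi.lt_toLex_update_self_iff.2 hd,
    Ioo_subset_Icc_self.trans ((ordConnected_cylinder x n).out (hmem b) (hmem d))⟩

variable [TopologicalSpace β] [DiscreteTopology β]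

theorem isOpen_setOf_toLex_lt (a : ℕ → β) : IsOpen {y : ℕ → β | toLex a < toLex y} := by
  refine isOpen_iff_mem_nhds.2 fun y ⟨i, hi, hlt⟩ => ?_
  refine mem_of_superset ((isOpen_cylinder _ y (i + 1)).mem_nhds (self_mem_cylinder y _))
    fun z hz => ⟨i, fun j hj => (hi j hj).trans (hz j (hj.trans i.lt_succ_self)).symm, ?_⟩
  simpa [hz i i.lt_succ_self] using hlt

theorem isOpen_setOf_lt_toLex (a : ℕ → β) : IsOpen {y : ℕ → β | toLex y < toLex a} := by
  refine isOpen_iff_mem_nhds.2 fun y ⟨i, hi, hlt⟩ => ?_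
  refine mem_of_superset ((isOpen_cylinder _ y (i + 1)).mem_nhds (self_mem_cylinder y _))
    fun z hz => ⟨i, fun j hj => (hz j (hj.trans i.lt_succ_self)).trans (hi j hj), ?_⟩
  simpa [hz i i.lt_succ_self] using hlt

end PiNat

-- Stated for the `<` of `Pi.Lex.linearOrder`, which instance search does not identify with the
-- `Pi.Lex` relation that `DenselyOrdered (Lex (ℕ → β))` would elaborate to.
instance Pi.Lex.denselyOrdered_of_noMinOrder {β : Type*} [LinearOrder β] [NoMinOrder β] :
    @DenselyOrdered (Lex (ℕ → β)) Preorder.toLT where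
  dense a c := by
    classical
    rintro ⟨i, hi, hlt⟩
    obtain ⟨b, hb⟩ := exists_lt (ofLex c (i + 1))
    refine ⟨toLex (update (ofLex c) (i + 1) b), ⟨i, fun j hj => ?_, ?_⟩,
      Pi.toLex_update_lt_self_iff.2 hb⟩
    · rw [hi j hj, toLex_apply, update_of_ne (by omega)]; rfl
    · rwa [toLex_apply, update_of_ne (by omega)]

theorem Pi.Lex.orderTopology_induced_ofLex {β : Type*} [LinearOrder β] [NoMinOrder β]
    [NoMaxOrder β] [TopologicalSpace β] [DiscreteTopology β] :
    @OrderTopology (Lex (ℕ → β)) (.induced ofLex inferInstance) _ := by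
  let := Preorder.topology (Lex (ℕ → β))
  have : OrderTopology (Lex (ℕ → β)) := ⟨rfl⟩
  have hcont : Continuous (ofLex : Lex (ℕ → β) → ℕ → β) := by
    refine continuous_iff_continuousAt.2 fun x => (nhds_hasBasis_cylinder _).tendsto_right_iff.2
      fun n _ => ?_
    obtain ⟨a, c, hax, hxc, hsub⟩ := exists_Ioo_subset_cylinder (ofLex x) n
    exact mem_of_superset (Ioo_mem_nhds hax hxc) hsub
  suffices h : ‹TopologicalSpace (Lex (ℕ → β))› = .induced ofLex inferInstance from h ▸ ‹_›
  refine le_antisymm (continuous_iff_le_induced.1 hcont) (le_generateFrom ?_)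
  rintro _ ⟨a, rfl | rfl⟩
  · exact isOpen_induced_iff.2 ⟨_, isOpen_setOf_toLex_lt (ofLex a), rfl⟩
  · exact isOpen_induced_iff.2 ⟨_, isOpen_setOf_lt_toLex (ofLex a), rfl⟩

theorem nonempty_homeomorph_rat_of_isEmbedding {X β : Type*} [TopologicalSpace X] [Countable X]
    [Nonempty X] [LinearOrder β] [NoMinOrder β] [NoMaxOrder β] [TopologicalSpace β]
    [DiscreteTopology β] {e : X → ℕ → β} (he : IsEmbedding e) (hd : DenseRange e) :
    Nonempty (X ≃ₜ ℚ) := by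
  let : TopologicalSpace (Lex (ℕ → β)) := .induced ofLex inferInstance
  have := Pi.Lex.orderTopology_induced_ofLex (β := β)
  let : LinearOrder X := LinearOrder.lift' (toLex ∘ e) (toLex.injective.comp he.injective)
  have hbetween {a b : Lex (ℕ → β)} (h : a < b) : ∃ x, toLex (e x) ∈ Ioo a b := by
    obtain ⟨_, ⟨x, rfl⟩, hx⟩ :=
      (toLex.surjective.denseRange.comp hd (continuous_induced_rng.2 (by exact continuous_id)))
        |>.exists_between h
    exact ⟨x, hx⟩
  have : OrderTopology X := by
    convert induced_orderTopology (toLex ∘ e) Iff.rfl hbetween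
    exact he.eq_induced.trans (induced_compose (f := toLex ∘ e) (g := ofLex)).symm
  have : DenselyOrdered X := ⟨fun _ _ h => hbetween h⟩
  have : NoMaxOrder X :=
    ⟨fun x => (hbetween (exists_gt (toLex (e x))).choose_spec).imp fun _ h => h.1⟩
  have : NoMinOrder X :=
    ⟨fun x => (hbetween (exists_lt (toLex (e x))).choose_spec).imp fun _ h => h.2⟩
  obtain ⟨f⟩ := Order.iso_of_countable_dense X ℚ
  exact ⟨f.toHomeomorph⟩

theorem isTopologicalBasis_isClopen_of_countable {X : Type*} [TopologicalSpace X]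
    [CompletelyRegularSpace X] [Countable X] :
    TopologicalSpace.IsTopologicalBasis {s : Set X | IsClopen s} :=
  CompletelyRegularSpace.isTopologicalBasis_clopens_of_cardinalMk_lt_continuum <|
    (Cardinal.mk_le_aleph0_iff.2 inferInstance).trans_lt Cardinal.aleph0_lt_continuum

theorem IsOpen.not_isCompact_of_countable {X : Type*} [TopologicalSpace X] [T2Space X]
    [Countable X] (hX : ∀ x : X, ¬IsOpen {x}) {U : Set X} (hU : IsOpen U) (hne : U.Nonempty) :
    ¬IsCompact U := by
  intro hc
  have : CompactSpace U := isCompact_iff_compactSpace.1 hc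
  have : Nonempty U := hne.to_subtype
  obtain ⟨y, hy⟩ := nonempty_interior_of_iUnion_of_closed (fun _ => isClosed_singleton)
    (iUnion_of_singleton U)
  have hy : IsOpen ({y} : Set U) := hy.subset_singleton_iff.1 interior_subset ▸ isOpen_interior
  exact hX y (by simpa using hU.isOpenMap_subtype_val _ hy)

theorem Set.Infinite.exists_injective_int_range_eq {ι : Type*} [Countable ι] {s : Set ι}
    (hs : s.Infinite) : ∃ e : ℤ → ι, Injective e ∧ range e = s := by
  have := hs.to_subtype
  obtain ⟨_⟩ := nonempty_denumerable s
  let f := (Denumerable.eqv ℤ).trans (Denumerable.eqv s).symm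
  exact ⟨(↑) ∘ f, Subtype.val_injective.comp f.injective, by
    rw [f.surjective.range_comp, Subtype.range_coe]⟩

structure IsFineClopenPartition {X ι : Type*} [MetricSpace X] (U : Set X) (V : ι → Set X)
    (δ : ℝ) : Prop where
  isClopen : ∀ i, IsClopen (V i)
  pairwise_disjoint : Pairwise (Disjoint on V)
  iUnion_eq : ⋃ i, V i = U
  dist_lt : ∀ i, ∀ y ∈ V i, ∀ z ∈ V i, dist y z < δ

section FinePartition

variable {X : Type*} [MetricSpace X] {U : Set X} {δ : ℝ}

theorem IsFineClopenPartition.exists_int_reindex {ι : Type*} [Countable ι] {V : ι → Set X}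
    (hV : IsFineClopenPartition U V δ) (hinf : {i | (V i).Nonempty}.Infinite) :
    ∃ W : ℤ → Set X, IsFineClopenPartition U W δ ∧ ∀ k, (W k).Nonempty := by
  obtain ⟨e, he, hrange⟩ := hinf.exists_injective_int_range_eq
  refine ⟨V ∘ e, ⟨fun _ => hV.isClopen _, fun _ _ hkl => hV.pairwise_disjoint (he.ne hkl), ?_,
    fun _ => hV.dist_lt _⟩, fun k => hrange.subset (mem_range_self k)⟩
  refine (iUnion_subset fun k => subset_iUnion V (e k)).antisymm ?_ |>.trans hV.iUnion_eq
  refine iUnion_subset fun i x hx => ?_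
  obtain ⟨k, rfl⟩ := hrange.symm.subset ⟨x, hx⟩
  exact mem_iUnion_of_mem k hx

theorem exists_isFineClopenPartition_nat [Countable X] (hX : ∀ x : X, ¬IsOpen {x})
    (hU : IsClopen U) (hne : U.Nonempty) (hδ : 0 < δ) :
    ∃ V : ℕ → Set X, IsFineClopenPartition U V δ ∧ {n | (V n).Nonempty}.Infinite := by
  classical
  obtain ⟨ι, O, hO, hUO, hfin⟩ : ∃ (ι : Type _) (O : ι → Set X), (∀ i, IsOpen (O i)) ∧
      U ⊆ ⋃ i, O i ∧ ∀ t : Finset ι, ¬U ⊆ ⋃ i ∈ t, O i := by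
    simpa [isCompact_iff_finite_subcover] using hU.isOpen.not_isCompact_of_countable hX hne
  obtain ⟨u, rfl⟩ := U.to_countable.exists_eq_range hne
  choose i hi using fun n => mem_iUnion.1 (hUO (mem_range_self n))
  -- Taking `W n ⊆ O (i n)` is what forces infinitely many of the disjointed pieces to be nonempty.
  choose W hWc hW hWsub using fun n => isTopologicalBasis_isClopen_of_countable.mem_nhds_iff.1 <|
    inter_mem (inter_mem (hU.isOpen.mem_nhds (mem_range_self n)) ((hO (i n)).mem_nhds (hi n)))
      (ball_mem_nhds (u n) (half_pos hδ))
  have hWu : ⋃ n, W n = range u :=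
    (iUnion_subset fun n => (hWsub n).trans (inter_subset_left.trans inter_subset_left)).antisymm
      (range_subset_iff.2 fun n => mem_iUnion_of_mem n (hW n))
  refine ⟨disjointed W, ⟨fun n => ?_, disjoint_disjointed W, iUnion_disjointed.trans hWu,
    fun n y hy z hz => ?_⟩, fun hJ => ?_⟩
  · rw [disjointed_eq_inter_compl]
    exact (hWc n).inter ((finite_Iio n).isClopen_biInter fun j _ => (hWc j).compl)
  · have hy := (hWsub n (disjointed_subset W n hy)).2
    have hz := (hWsub n (disjointed_subset W n hz)).2
    rw [mem_ball] at hy hz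
    linarith [dist_triangle_right y z (u n)]
  · obtain ⟨N, hN⟩ := hJ.bddAbove
    refine hfin ((Finset.range (N + 1)).image i) fun x hx => ?_
    obtain ⟨n, hn⟩ := mem_iUnion.1 ((iUnion_disjointed.trans hWu).symm ▸ hx)
    exact mem_iUnion₂.2 ⟨i n, Finset.mem_image_of_mem i (Finset.mem_range.2
      (Nat.lt_succ_of_le (hN ⟨x, hn⟩))), (hWsub n (disjointed_subset W n hn)).1.2⟩

end FinePartition

namespace FineClopenPartition

variable {X : Type*} (P : Set X → ℕ → ℤ → Set X)

noncomputable def cell (x : X) : ℕ → Set X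
  | 0 => univ
  | n + 1 => P (cell x n) n (Classical.epsilon fun k => x ∈ P (cell x n) n k)

noncomputable def address (x : X) (n : ℕ) : ℤ :=
  Classical.epsilon fun k => x ∈ P (cell P x n) n k

theorem cell_succ (x : X) (n : ℕ) : cell P x (n + 1) = P (cell P x n) n (address P x n) := rfl

variable [MetricSpace X] {P}
  (hP : ∀ S n, IsClopen S → S.Nonempty →
    IsFineClopenPartition S (P S n) ((1 / 2) ^ n) ∧ ∀ k, (P S n k).Nonempty)
include hP

theorem isClopen_cell_and_mem (x : X) (n : ℕ) : IsClopen (cell P x n) ∧ x ∈ cell P x n := by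
  induction n with
  | zero => exact ⟨isClopen_univ, mem_univ x⟩
  | succ n ih =>
    have hpart := (hP _ n ih.1 ⟨x, ih.2⟩).1
    obtain ⟨k, hk⟩ := mem_iUnion.1 (hpart.iUnion_eq.symm ▸ ih.2)
    exact ⟨hpart.isClopen _, Classical.epsilon_spec (p := (x ∈ P (cell P x n) n ·)) ⟨k, hk⟩⟩

theorem isFineClopenPartition_cell (x : X) (n : ℕ) :
    IsFineClopenPartition (cell P x n) (P (cell P x n) n) ((1 / 2) ^ n) :=
  (hP _ n (isClopen_cell_and_mem hP x n).1 ⟨x, (isClopen_cell_and_mem hP x n).2⟩).1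

theorem cell_succ_subset (x : X) (n : ℕ) : cell P x (n + 1) ⊆ cell P x n :=
  (subset_iUnion _ (address P x n)).trans (isFineClopenPartition_cell hP x n).iUnion_eq.subset

theorem address_eq_of_mem {x y : X} {n : ℕ} {k : ℤ} (hxy : cell P y n = cell P x n)
    (hy : y ∈ P (cell P x n) n k) : address P y n = k := by
  by_contra hne
  have hy' : y ∈ P (cell P x n) n (address P y n) := hxy ▸ (isClopen_cell_and_mem hP y (n + 1)).2
  exact disjoint_left.1 ((isFineClopenPartition_cell hP x n).pairwise_disjoint hne) hy' hy

theorem cell_eq_of_mem {x y : X} {n : ℕ} (hy : y ∈ cell P x n) : cell P y n = cell P x n := by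
  induction n with
  | zero => rfl
  | succ n ih =>
    have hxy := ih (cell_succ_subset hP x n hy)
    rw [cell_succ] at hy
    rw [cell_succ, cell_succ, hxy, address_eq_of_mem hP hxy hy]

theorem mem_cell_iff {x y : X} {n : ℕ} :
    y ∈ cell P x n ↔ ∀ m < n, address P y m = address P x m := by
  induction n with
  | zero => simp [cell]
  | succ n ih =>
    rw [Nat.forall_lt_succ_right, ← ih]
    refine ⟨fun hy => ⟨cell_succ_subset hP x n hy,
      address_eq_of_mem hP (cell_eq_of_mem hP (cell_succ_subset hP x n hy)) hy⟩, fun ⟨hy, hn⟩ => ?_⟩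
    rw [cell_succ, ← hn, ← cell_eq_of_mem hP hy]
    exact (isClopen_cell_and_mem hP y (n + 1)).2

theorem dist_lt_of_mem_cell {x y : X} {n : ℕ} (hy : y ∈ cell P x (n + 1)) :
    dist y x < (1 / 2) ^ n :=
  (isFineClopenPartition_cell hP x n).dist_lt _ y hy x (isClopen_cell_and_mem hP x (n + 1)).2

theorem exists_mem_cell_address_eq (x : X) (n : ℕ) (k : ℤ) :
    ∃ y ∈ cell P x n, address P y n = k := by
  obtain ⟨hx₁, hx₂⟩ := isClopen_cell_and_mem hP x n
  obtain ⟨y, hy⟩ := (hP _ n hx₁ ⟨x, hx₂⟩).2 k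
  have hyx : y ∈ cell P x n :=
    (isFineClopenPartition_cell hP x n).iUnion_eq ▸ mem_iUnion_of_mem k hy
  exact ⟨y, hyx, address_eq_of_mem hP (cell_eq_of_mem hP hyx) hy⟩

theorem preimage_cylinder_address (x : X) (n : ℕ) :
    address P ⁻¹' cylinder (address P x) n = cell P x n :=
  ext fun _ => (mem_cell_iff hP).symm

theorem nhds_hasBasis_cell (x : X) : (𝓝 x).HasBasis (fun _ => True) (cell P x) := by
  refine nhds_basis_ball.to_hasBasis (fun ε hε => ?_) fun n _ =>
    isOpen_iff.1 (isClopen_cell_and_mem hP x n).1.isOpen x (isClopen_cell_and_mem hP x n).2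
  obtain ⟨n, hn⟩ := exists_pow_lt_of_lt_one hε one_half_lt_one
  exact ⟨n + 1, trivial, fun y hy => (dist_lt_of_mem_cell hP hy).trans hn⟩

theorem isEmbedding_address : IsEmbedding (address P) := by
  refine (isInducing_iff_nhds.2 fun x => (nhds_hasBasis_cell hP x).eq_of_same_basis ?_).isEmbedding
  simpa only [preimage_cylinder_address hP] using
    (nhds_hasBasis_cylinder (address P x)).comap (address P)

theorem exists_address_mem_cylinder [Nonempty X] (a : ℕ → ℤ) (n : ℕ) :
    ∃ x, address P x ∈ cylinder a n := by
  induction n with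
  | zero => exact ⟨Classical.arbitrary X, by simp⟩
  | succ n ih =>
    obtain ⟨x, hx⟩ := ih
    obtain ⟨y, hyx, hy⟩ := exists_mem_cell_address_eq hP x n (a n)
    refine ⟨y, mem_cylinder_iff.2 (Nat.forall_lt_succ_right.2 ⟨fun m hm => ?_, hy⟩)⟩
    exact ((mem_cell_iff hP).1 hyx m hm).trans (hx m hm)

theorem denseRange_address [Nonempty X] : DenseRange (address P) := by
  refine (isTopologicalBasis_cylinders _).dense_iff.2 ?_
  rintro _ ⟨a, n, rfl⟩ -
  obtain ⟨x, hx⟩ := exists_address_mem_cylinder hP a n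
  exact ⟨_, hx, mem_range_self x⟩

end FineClopenPartition

theorem nonempty_homeomorph_rat (X : Type*) [TopologicalSpace X]
    [TopologicalSpace.MetrizableSpace X] [Countable X] [Nonempty X] (hX : ∀ x : X, ¬IsOpen {x}) : Nonempty (X ≃ₜ ℚ) := by
  let := TopologicalSpace.metrizableSpaceMetric X
  let P (S : Set X) (n : ℕ) : ℤ → Set X :=
    Classical.epsilon fun V => IsFineClopenPartition S V ((1 / 2) ^ n) ∧ ∀ k, (V k).Nonempty
  have hP (S : Set X) (n : ℕ) (hS : IsClopen S) (hne : S.Nonempty) :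
      IsFineClopenPartition S (P S n) ((1 / 2) ^ n) ∧ ∀ k, (P S n k).Nonempty := by
    obtain ⟨V, hV, hinf⟩ :=
      exists_isFineClopenPartition_nat hX hS hne (pow_pos one_half_pos n : (0 : ℝ) < _)
    exact Classical.epsilon_spec (hV.exists_int_reindex hinf)
  exact nonempty_homeomorph_rat_of_isEmbedding (FineClopenPartition.isEmbedding_address hP)
    (FineClopenPartition.denseRange_address hP)

instance : Countable Pf := by
  have hfin (α : Pf) : {n | α.1 n = true}.Finite := by
    have h : ∀ᶠ n in cofinite, α.1 n = false := Nat.cofinite_eq_atTop ▸ α.2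
    simpa using eventually_cofinite.1 h
  refine Injective.countable (f := fun α : Pf => (hfin α).toFinset) fun α β h => ?_
  ext n
  exact Bool.eq_iff_iff.2 (Set.ext_iff.1 (Finite.toFinset_inj.1 h) n)

theorem Pf.update_mem {α : ℕ → Bool} (hα : α ∈ Pf) (n : ℕ) (b : Bool) : update α n b ∈ Pf :=
  (hα.and (eventually_gt_atTop n)).mono fun _ h => (update_of_ne h.2.ne' _ _).trans h.1

theorem Pf.not_isOpen_singleton (α : Pf) : ¬IsOpen ({α} : Set Pf) := by
  intro h
  let flip (n : ℕ) : Pf := ⟨update α n (!α.1 n), Pf.update_mem α.2 n _⟩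
  have hflip : Tendsto flip atTop (𝓝 α) :=
    tendsto_subtype_rng.2 <| tendsto_pi_nhds.2 fun k => tendsto_const_nhds.congr' <|
      (eventually_gt_atTop k).mono fun _ hn => by simp [flip, update_of_ne hn.ne]
  obtain ⟨n, hn⟩ := (hflip.eventually (h.mem_nhds rfl)).exists
  simpa [flip] using congr_fun (congr_arg Subtype.val hn) n

/-- Sierpiński's theorem: a nonempty countable metrizable perfect space is
homeomorphic to `ℚ`, and in particular to `ℙ_f`. -/
theorem stmt6 (X : Type*) [TopologicalSpace X] [Nonempty X] [Countable X]
    [TopologicalSpace.MetrizableSpace X]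
    (hperf : ∀ x : X, ¬ IsOpen ({x} : Set X)) :
    Nonempty (X ≃ₜ ℚ) ∧ Nonempty (X ≃ₜ Pf) := by
  obtain ⟨e⟩ := nonempty_homeomorph_rat X hperf
  have : Nonempty Pf := ⟨⟨fun _ => false, Eventually.of_forall fun _ => rfl⟩⟩
  obtain ⟨f⟩ := nonempty_homeomorph_rat Pf Pf.not_isOpen_singleton
  exact ⟨⟨e⟩, ⟨e.trans f.symm⟩⟩
end

section
/- Let R be a relation on 2^ω all of whose vertical and horizontal sections are nowhere dense. Then there exists an injective continuous map f : 2^ω → 2^ω with f⁻¹(ℙ_f) = ℙ_f such that (f(α), f(β)) ∉ R whenever α ≠ β are both in ℙ_f. -/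
/-!
Every finite binary string `t` gets a stem `node R t`, with `node R (b :: t)` extending
`node R t ++ [b]`. Along a branch `α` the stems converge to `cantorMap R α`, which is therefore
continuous. The bit `α i` reappears at position `length (node R (res α i))` of the image; this
makes the map injective, and the image of a sequence with infinitely many `true`s has infinitely
many `true`s. A point of `ℙ_f` is `t` followed by zeros, where `t` is empty or
ends in `true`; its image is the stem at `false :: t` followed by zeros. Only at such nodes is the
stem chosen freely: the nowhere dense sections of `R` through the finitely many images of points
with a smaller code form a nowhere dense set, and the stem is extended so that its zero-extension
avoids that set. Of two distinct points of `ℙ_f`, the one with the larger code thus avoids the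
sections through the other.
-/

open Set Filter PiNat

section NowhereDense

variable {X : Type*} [TopologicalSpace X]

theorem IsNowhereDense.union {s t : Set X} (hs : IsNowhereDense s) (ht : IsNowhereDense t) :
    IsNowhereDense (s ∪ t) := by
  rw [IsNowhereDense, closure_union, interior_union_isClosed_of_interior_empty isClosed_closure ht]
  exact hs

theorem Set.Finite.isNowhereDense_biUnion {ι : Type*} {I : Set ι} (hI : I.Finite)
    {s : ι → Set X} (hs : ∀ i ∈ I, IsNowhereDense (s i)) :
    IsNowhereDense (⋃ i ∈ I, s i) := by
  induction I, hI using Set.Finite.induction_on with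
  | empty => simp
  | @insert a I _ _ ih =>
    rw [biUnion_insert]
    exact (hs a (mem_insert a I)).union (ih fun i hi => hs i (mem_insert_of_mem a hi))

end NowhereDense

theorem List.IsPrefix.getD_eq {α : Type*} {l₁ l₂ : List α} (h : l₁ <+: l₂) {n : ℕ}
    (hn : n < l₁.length) (d : α) : l₁.getD n d = l₂.getD n d := by
  rw [List.getD_eq_getElem _ _ hn, List.getD_eq_getElem _ _ (hn.trans_le h.length_le),
    h.getElem hn]

theorem PiNat.continuous_of_res_eq {E Y : Type*} [TopologicalSpace E] [DiscreteTopology E]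
    [TopologicalSpace Y] {g : (ℕ → E) → Y} (k : ℕ)
    (hg : ∀ x y, res x k = res y k → g x = g y) :
    Continuous g := by
  refine IsLocallyConstant.continuous ((IsLocallyConstant.iff_eventually_eq g).2 fun x => ?_)
  filter_upwards [(isOpen_cylinder _ x k).mem_nhds (self_mem_cylinder x k)] with y hy
  exact hg y x (res_eq_res.2 (mem_cylinder_iff.1 hy))

def zeroExtend (v : List Bool) : ℕ → Bool := fun n => v.getD n false

theorem zeroExtend_append_false (v : List Bool) : zeroExtend (v ++ [false]) = zeroExtend v := by
  funext n
  simp only [zeroExtend]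
  rcases lt_trichotomy n v.length with h | rfl | h
  · exact List.getD_append _ _ _ _ h
  · simp
  · rw [List.getD_eq_default _ _ (by simp; omega), List.getD_eq_default _ _ h.le]

theorem zeroExtend_mem_Pf (v : List Bool) : zeroExtend v ∈ Pf :=
  eventually_atTop.2 ⟨v.length, fun _ hn => List.getD_eq_default _ _ hn⟩

theorem exists_prefix_zeroExtend_notMem {N : Set (ℕ → Bool)} (hN : IsNowhereDense N)
    (w : List Bool) : ∃ v, w <+: v ∧ zeroExtend v ∉ N := by
  obtain ⟨γ, hγw, hγN⟩ : (cylinder (zeroExtend w) w.length ∩ (closure N)ᶜ).Nonempty :=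
    (interior_eq_empty_iff_dense_compl.1 hN).inter_open_nonempty _ (isOpen_cylinder _ _ _)
      ⟨_, self_mem_cylinder _ _⟩
  obtain ⟨n, hn⟩ := exists_disjoint_cylinder isClosed_closure hγN
  set v := List.ofFn fun i : Fin (max n w.length) => γ i
  have hv : ∀ i < max n w.length, zeroExtend v i = γ i := fun i hi => by
    simp [zeroExtend, v, lt_max_iff.1 hi]
  refine ⟨v, List.prefix_iff_getElem.2 ⟨by simp [v], fun i hi => ?_⟩, fun hvN => ?_⟩
  · simpa [zeroExtend, v, List.getElem?_eq_getElem hi] using (mem_cylinder_iff.1 hγw i hi).symm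
  · refine hn.ne_of_mem (subset_closure hvN) (mem_cylinder_iff.2 fun i hi => ?_) rfl
    exact hv i (lt_max_of_lt_left hi)

open Classical in
noncomputable def extendAvoiding (w : List Bool) (N : Set (ℕ → Bool)) : List Bool :=
  if h : ∃ v, w <+: v ∧ zeroExtend v ∉ N then h.choose else w

theorem prefix_extendAvoiding (w : List Bool) (N : Set (ℕ → Bool)) :
    w <+: extendAvoiding w N := by
  unfold extendAvoiding
  split_ifs with h
  exacts [h.choose_spec.1, List.prefix_refl w]

theorem zeroExtend_extendAvoiding_notMem {N : Set (ℕ → Bool)} (hN : IsNowhereDense N)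
    (w : List Bool) : zeroExtend (extendAvoiding w N) ∉ N := by
  have h := exists_prefix_zeroExtend_notMem hN w
  rw [extendAvoiding, dif_pos h]
  exact h.choose_spec.2

def sections {X : Type*} (R : Set (X × X)) (γ : X) : Set X :=
  {β | (γ, β) ∈ R} ∪ {β | (β, γ) ∈ R}

theorem isNowhereDense_sections {X : Type*} [TopologicalSpace X] {R : Set (X × X)}
    (hV : ∀ α, IsNowhereDense {β | (α, β) ∈ R})
    (hH : ∀ α, IsNowhereDense {β | (β, α) ∈ R})
    (γ : X) : IsNowhereDense (sections R γ) :=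
  (hV γ).union (hH γ)

/-- Bijective base-2 numeration of binary strings, stored most recent bit first as in
`PiNat.res`; each string is coded below its one-bit extensions. -/
def code : List Bool → ℕ
  | [] => 0
  | b :: t => 2 * code t + 1 + b.toNat

theorem code_injective : Function.Injective code := by
  intro s t h
  induction s generalizing t with
  | nil =>
    cases t with
    | nil => rfl
    | cons c t => simp [code] at h; omega
  | cons b s ih =>
    cases t with
    | nil => simp [code] at h
    | cons c t =>
      simp only [code] at h
      obtain ⟨rfl, hst⟩ : b = c ∧ code s = code t := by
        cases b <;> cases c <;> simp at h ⊢ <;> omega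
      rw [ih hst]

theorem finite_setOf_code_lt (n : ℕ) : {s | code s < n}.Finite :=
  (finite_Iio n).preimage code_injective.injOn

namespace CantorEmbedding

variable (R : Set ((ℕ → Bool) × (ℕ → Bool)))

noncomputable def node : List Bool → List Bool
  | [] => []
  | true :: t => node t ++ [true]
  | false :: t =>
    if t.head? = some false then node t ++ [false]
    else extendAvoiding (node t ++ [false])
      (⋃ (s : List Bool) (_ : code s < code t), sections R (zeroExtend (node (false :: s))))
termination_by t => code t
decreasing_by all_goals simp only [code]; omega

theorem node_false_cons_of_head (t : List Bool) (ht : t.head? = some false) :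
    node R (false :: t) = node R t ++ [false] := by
  rw [node, if_pos ht]

theorem node_false_cons (t : List Bool) (ht : t.head? ≠ some false) :
    node R (false :: t) = extendAvoiding (node R t ++ [false])
      (⋃ (s : List Bool) (_ : code s < code t),
        sections R (zeroExtend (node R (false :: s)))) := by
  rw [node, if_neg ht]

theorem prefix_node_cons (b : Bool) (t : List Bool) : node R t ++ [b] <+: node R (b :: t) := by
  cases b
  · by_cases ht : t.head? = some false
    · rw [node_false_cons_of_head R t ht]
    · rw [node_false_cons R t ht]
      exact prefix_extendAvoiding _ _
  · rw [node]

theorem prefix_node_res (α : ℕ → Bool) {m n : ℕ} (h : m ≤ n) :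
    node R (res α m) <+: node R (res α n) := by
  induction n, h using Nat.le_induction with
  | base => exact List.prefix_refl _
  | succ n _ ih =>
    rw [res_succ]
    exact ih.trans ((List.prefix_append _ _).trans (prefix_node_cons R _ _))

theorem le_length_node_res (α : ℕ → Bool) (n : ℕ) : n ≤ (node R (res α n)).length := by
  induction n with
  | zero => exact Nat.zero_le _
  | succ n ih =>
    have := (prefix_node_cons R (α n) (res α n)).length_le
    rw [res_succ]
    simp only [List.length_append, List.length_singleton] at this
    omega

/-- The stem at depth `n + 1` has length greater than `n`, so this is the limit of the stems
along `α`. -/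
noncomputable def cantorMap (α : ℕ → Bool) : ℕ → Bool :=
  fun n => (node R (res α (n + 1))).getD n false

theorem cantorMap_eq_getD {α : ℕ → Bool} {n k : ℕ} (hn : n < (node R (res α k)).length) :
    cantorMap R α n = (node R (res α k)).getD n false := by
  rcases le_total (n + 1) k with h | h
  · exact (prefix_node_res R α h).getD_eq (le_length_node_res R α (n + 1)) false
  · exact ((prefix_node_res R α h).getD_eq hn false).symm

theorem cantorMap_length_node_res (α : ℕ → Bool) (i : ℕ) :
    cantorMap R α (node R (res α i)).length = α i := by
  have hpre : node R (res α i) ++ [α i] <+: node R (res α (i + 1)) := by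
    rw [res_succ]; exact prefix_node_cons R _ _
  rw [cantorMap_eq_getD R (lt_of_lt_of_le (by simp) hpre.length_le),
    ← hpre.getD_eq (by simp) false]
  simp

theorem continuous_cantorMap : Continuous (cantorMap R) :=
  continuous_pi fun n => continuous_of_res_eq (n + 1) fun x y h => by simp only [cantorMap, h]

theorem cantorMap_injective : Function.Injective (cantorMap R) := by
  intro α β h
  by_contra hne
  have hres : res α (firstDiff α β) = res β (firstDiff α β) :=
    res_eq_res.2 fun _ hi => apply_eq_of_lt_firstDiff hi
  apply apply_firstDiff_ne hne
  rw [← cantorMap_length_node_res R α, ← cantorMap_length_node_res R β, h, hres]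

theorem mem_Pf_of_cantorMap_mem_Pf {α : ℕ → Bool} (h : cantorMap R α ∈ Pf) : α ∈ Pf := by
  obtain ⟨M, hM⟩ := eventually_atTop.1 h
  refine eventually_atTop.2 ⟨M, fun n hn => ?_⟩
  rw [← cantorMap_length_node_res R α n]
  exact hM _ (hn.trans (le_length_node_res R α n))

theorem cantorMap_eq_zeroExtend {α : ℕ → Bool} {N : ℕ} (hN : ∀ n ≥ N, α n = false) :
    cantorMap R α = zeroExtend (node R (false :: res α N)) := by
  have hstable : ∀ k, zeroExtend (node R (res α (N + 1 + k))) =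
      zeroExtend (node R (false :: res α N)) := by
    intro k
    induction k with
    | zero => rw [Nat.add_zero, res_succ, hN N le_rfl]
    | succ k ih =>
      have hhead : (res α (N + 1 + k)).head? = some false := by
        rw [show N + 1 + k = (N + k) + 1 by omega, res_succ, hN _ (by omega)]; rfl
      rw [← Nat.add_assoc, res_succ, hN _ (by omega), node_false_cons_of_head R _ hhead,
        zeroExtend_append_false, ih]
  funext n
  have hn : n < (node R (res α (N + 1 + (n + 1)))).length :=
    lt_of_lt_of_le (by omega) (le_length_node_res R α _)
  rw [cantorMap_eq_getD R hn, ← hstable]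
  rfl

theorem zeroExtend_node_notMem_sections
    (hV : ∀ α, IsNowhereDense {β | (α, β) ∈ R})
    (hH : ∀ α, IsNowhereDense {β | (β, α) ∈ R})
    {s t : List Bool} (ht : t.head? ≠ some false) (hst : code s < code t) :
    zeroExtend (node R (false :: t)) ∉ sections R (zeroExtend (node R (false :: s))) := by
  rw [node_false_cons R t ht]
  refine fun hmem => zeroExtend_extendAvoiding_notMem ?_ _ (mem_iUnion₂.2 ⟨s, hst, hmem⟩)
  exact (finite_setOf_code_lt _).isNowhereDense_biUnion fun _ _ => isNowhereDense_sections hV hH _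

end CantorEmbedding

open CantorEmbedding

theorem exists_head_res_ne_false_of_mem_Pf {α : ℕ → Bool} (hα : α ∈ Pf) :
    ∃ M, (res α M).head? ≠ some false ∧ ∀ n ≥ M, α n = false := by
  obtain ⟨N, hN⟩ := eventually_atTop.1 hα
  induction N with
  | zero => exact ⟨0, by simp, hN⟩
  | succ N ih =>
    by_cases hαN : α N = false
    · exact ih fun n hn => hn.eq_or_lt.elim (fun h => h ▸ hαN) fun h => hN n h
    · exact ⟨N + 1, by simpa [res_succ] using hαN, hN⟩

theorem res_ne_res_of_ne {α β : ℕ → Bool} {N M : ℕ} (hN : ∀ n ≥ N, α n = false)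
    (hM : ∀ n ≥ M, β n = false) (hne : α ≠ β) : res α N ≠ res β M := by
  intro h
  obtain rfl : N = M := by simpa [res_length] using congrArg List.length h
  refine hne (funext fun n => ?_)
  rcases lt_or_ge n N with hn | hn
  · exact res_eq_res.1 h hn
  · rw [hN n hn, hM n hn]

/-- If all sections of `R` are nowhere dense, then there is an injective continuous
map preserving `ℙ_f` whose square avoids `R` off the diagonal of `ℙ_f`. -/
theorem stmt7 (R : Set ((ℕ → Bool) × (ℕ → Bool)))
    (hV : ∀ α, IsNowhereDense {β | (α, β) ∈ R})
    (hH : ∀ α, IsNowhereDense {β | (β, α) ∈ R}) :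
    ∃ f : (ℕ → Bool) → (ℕ → Bool), Function.Injective f ∧ Continuous f ∧
      f ⁻¹' Pf = Pf ∧
      ∀ α ∈ Pf, ∀ β ∈ Pf, α ≠ β → (f α, f β) ∉ R := by
  refine ⟨cantorMap R, cantorMap_injective R, continuous_cantorMap R, ?_, ?_⟩
  · ext α
    refine ⟨mem_Pf_of_cantorMap_mem_Pf R, fun hα => ?_⟩
    obtain ⟨N, hN⟩ := eventually_atTop.1 hα
    rw [mem_preimage, cantorMap_eq_zeroExtend R hN]
    exact zeroExtend_mem_Pf _
  · intro α hα β hβ hne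
    obtain ⟨N, hαN, hN⟩ := exists_head_res_ne_false_of_mem_Pf hα
    obtain ⟨M, hβM, hM⟩ := exists_head_res_ne_false_of_mem_Pf hβ
    rw [cantorMap_eq_zeroExtend R hN, cantorMap_eq_zeroExtend R hM]
    rcases (code_injective.ne (res_ne_res_of_ne hN hM hne)).lt_or_gt with h | h
    · exact fun hR => zeroExtend_node_notMem_sections R hV hH hβM h (Or.inl hR)
    · exact fun hR => zeroExtend_node_notMem_sections R hV hH hαN h (Or.inr hR)
end
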